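/- Let g be a normalized arithmetic function of moderate growth (i.e., |g(n)| ≤ C^n for some constant C > 0) with g(n) ≥ 0 for all n, and set g̃(n) := g(n)/n. Fix n ≥ 1. If the coefficient sequence (a_{n,0}, …, a_{n,n}) of P_n^{g̃,1}(x) is log-concave (i.e., a_{n,j}^2 ≥ a_{n,j−1} a_{n,j+1} for 1 ≤ j ≤ n−1), then the coefficient sequence of P_n^{g,id}(x) is log-concave; likewise, if the coefficient sequence of P_n^{g̃,1}(x) is ultra-log-concave (i.e., the sequence a_{n,k}/C(n,k) is log-concave), then the coefficient sequence of P_n^{g,id}(x) is ultra-log-concave. -/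

import Mathlib

open Finset Polynomial

/-- The recursively defined polynomials `P_n^{g,h}` attached to arithmetic functions
`g, h : ℕ → ℝ` (values at `0` are irrelevant): `P_0 = 1` and
`P_n(x) = (x / h(n)) · Σ_{k=1}^n g(k) · P_{n-k}(x)`. -/
noncomputable def Ppoly (g h : ℕ → ℝ) : ℕ → Polynomial ℝ
  | 0 => 1
  | (n+1) => Polynomial.C (h (n+1))⁻¹ * Polynomial.X *
      ∑ k ∈ Finset.range (n+1), Polynomial.C (g (k+1)) * Ppoly g h (n - k)
  termination_by n => n
  decreasing_by simp_wf <;> omega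

/-- `A_{n,m}^{g,h}`: the coefficient of `x^m` in `(∏_{k=1}^n h(k)) · P_n^{g,h}(x)`. -/
noncomputable def Acoeff (g h : ℕ → ℝ) (n m : ℕ) : ℝ :=
  (∏ k ∈ Finset.Icc 1 n, h k) * (Ppoly g h n).coeff m

/-- `h` extended by the convention `h(0) := 0`. -/
noncomputable def hExt (h : ℕ → ℝ) (n : ℕ) : ℝ := if n = 0 then 0 else h n

/-- `h_m(n) = ∏_{k=0}^{m-1} h(n-k)` (with the convention `h(0) := 0`). -/
noncomputable def hIter (h : ℕ → ℝ) (m n : ℕ) : ℝ :=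
  ∏ k ∈ Finset.range m, hExt h (n - k)

/-- Helper for `H(μ,n)`: defined on reversed compositions, peeling off the head
(which is the last part `μ_{r+1}` of the original composition). -/
noncomputable def Hrev (h : ℕ → ℝ) : List ℕ → ℕ → ℝ
  | [], _ => 1
  | (a :: t), n =>
      if n < (a :: t).sum + (a :: t).length then 0
      else ∑ k ∈ Finset.Ico ((a :: t).sum + (a :: t).length - 1) n,
        hIter h a k * Hrev h t (k - a)

/-- `H(μ, n)` for a composition `μ` (a list of positive integers): `H(ε,n) = 1`,
`H(μ,n) = Σ_{k=|μ|+ℓ(μ)-1}^{n-1} h_{μ_{r+1}}(k) · H((μ_1,…,μ_r), k - μ_{r+1})`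
if `n ≥ |μ| + ℓ(μ)`, and `0` otherwise. -/
noncomputable def HFun (h : ℕ → ℝ) (μ : List ℕ) (n : ℕ) : ℝ := Hrev h μ.reverse n

/-- `𝓗(μ, n) = Σ_{λ ∈ Orb(μ)} H(λ, n)`: sum over all distinct rearrangements of `μ`. -/
noncomputable def HCal (h : ℕ → ℝ) (μ : List ℕ) (n : ℕ) : ℝ :=
  ∑ lam ∈ μ.permutations.toFinset, HFun h lam n

/-- `𝓖(μ) = ∏_{k=1}^{ℓ(μ)} g(μ_k + 1)`. -/
noncomputable def GCal (g : ℕ → ℝ) (μ : List ℕ) : ℝ := (μ.map (fun p => g (p + 1))).prod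

/-- A finite sequence `a_0, …, a_n` is log-concave if `a_j² ≥ a_{j-1} a_{j+1}`
for `1 ≤ j ≤ n-1`. -/
def SeqLogConcave (a : ℕ → ℝ) (n : ℕ) : Prop :=
  ∀ j, 1 ≤ j → j ≤ n - 1 → a j ^ 2 ≥ a (j - 1) * a (j + 1)

/-- Ultra-log-concave: the sequence `a_k / C(n,k)` is log-concave. -/
def SeqUltraLogConcave (a : ℕ → ℝ) (n : ℕ) : Prop :=
  SeqLogConcave (fun k => a k / (Nat.choose n k : ℝ)) n

/-
With `P_n = P_n^{g,id}` and `Q_n = P_n^{g̃,1}`, the recursion gives `P_n' = Σ_k g̃(k) P_{n-k}`,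
which is the recursion of `Q_n` up to the factor `x`. Comparing coefficients yields
`[x^m] Q_n = m! · [x^m] P_n`. The coefficients of `Q_n` are non-negative and `(1/m!)` is
log-concave, and the product of two log-concave sequences, one of them non-negative, is
log-concave.
-/

section Ppoly

variable (g h : ℕ → ℝ)

lemma Ppoly_zero : Ppoly g h 0 = 1 := by rw [Ppoly]

lemma Ppoly_succ (n : ℕ) : Ppoly g h (n + 1) =
    C (h (n + 1))⁻¹ * X * ∑ k ∈ range (n + 1), C (g (k + 1)) * Ppoly g h (n - k) := by
  rw [Ppoly]

lemma Ppoly_succ_coeff_zero (n : ℕ) : (Ppoly g h (n + 1)).coeff 0 = 0 := by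
  simp [Ppoly_succ, mul_assoc, mul_coeff_zero]

lemma Ppoly_succ_coeff_succ (n m : ℕ) : (Ppoly g h (n + 1)).coeff (m + 1) =
    (h (n + 1))⁻¹ * ∑ k ∈ range (n + 1), g (k + 1) * (Ppoly g h (n - k)).coeff m := by
  simp only [Ppoly_succ, mul_assoc, coeff_C_mul, coeff_X_mul, finsetSum_coeff]

lemma Ppoly_coeff_nonneg (hg : ∀ k, 0 ≤ g (k + 1)) (hh : ∀ k, 0 ≤ h (k + 1)) (n m : ℕ) :
    0 ≤ (Ppoly g h n).coeff m := by
  induction n using Nat.strong_induction_on generalizing m with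
  | _ n ih =>
  rcases n with _ | n
  · rw [Ppoly_zero, coeff_one]
    positivity
  rcases m with _ | m
  · rw [Ppoly_succ_coeff_zero]
  rw [Ppoly_succ_coeff_succ]
  exact mul_nonneg (inv_nonneg.2 (hh n))
    (sum_nonneg fun k _ => mul_nonneg (hg k) (ih _ (by omega) m))

end Ppoly

section PpolyId

variable (g : ℕ → ℝ)

local notation "𝔓" => Ppoly g (fun k : ℕ => (k : ℝ))

lemma natCast_mul_Ppoly_id (n : ℕ) :
    C (n : ℝ) * 𝔓 n = X * ∑ k ∈ range n, C (g (k + 1)) * 𝔓 (n - 1 - k) := by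
  rcases n with _ | n
  · simp
  have hn : ((n + 1 : ℕ) : ℝ) ≠ 0 := by positivity
  rw [Ppoly_succ, ← mul_assoc, ← mul_assoc, ← C_mul, mul_inv_cancel₀ hn, C_1, one_mul]
  rfl

lemma derivative_Ppoly_id (n : ℕ) :
    derivative (𝔓 n) = ∑ k ∈ range n, C (g (k + 1) / (k + 1 : ℕ)) * 𝔓 (n - 1 - k) := by
  induction n using Nat.strong_induction_on with
  | _ n ih =>
  rcases n with _ | m
  · simp [Ppoly_zero]
  set T := ∑ k ∈ range (m + 1), C (g (k + 1)) * 𝔓 (m - k)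
  have hT : C ((m + 1 : ℕ) : ℝ) * 𝔓 (m + 1) = X * T := natCast_mul_Ppoly_id g (m + 1)
  have hT' : derivative T = ∑ k ∈ range (m + 1), ∑ j ∈ range (m - k),
      C (g (k + 1)) * (C (g (j + 1) / (j + 1 : ℕ)) * 𝔓 (m - k - 1 - j)) := by
    simp only [T, derivative_sum, derivative_C_mul]
    refine sum_congr rfl fun k hk => ?_
    rw [ih (m - k) (by simp at hk; omega), mul_sum]
  -- split `m + 1 = (m - k) + (k + 1)` and expand `(m - k) 𝔓 (m - k)` by the recursion again
  have hsplit : ∀ k ∈ range (m + 1), C ((m + 1 : ℕ) : ℝ) * (C (g (k + 1) / (k + 1 : ℕ)) * 𝔓 (m - k))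
      = X * ∑ j ∈ range (m - k), C (g (k + 1) / (k + 1 : ℕ)) * (C (g (j + 1)) * 𝔓 (m - k - 1 - j))
        + C (g (k + 1)) * 𝔓 (m - k) := by
    intro k hk
    have hcast : ((m + 1 : ℕ) : ℝ) = ((m - k : ℕ) : ℝ) + ((k + 1 : ℕ) : ℝ) := by
      rw [← Nat.cast_add]; congr 1; simp at hk; omega
    have hg : C ((k + 1 : ℕ) : ℝ) * C (g (k + 1) / (k + 1 : ℕ)) = C (g (k + 1)) := by
      rw [← C_mul, mul_div_cancel₀ _ (by positivity)]
    rw [← mul_sum, hcast, C_add, add_mul, ← hg]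
    linear_combination C (g (k + 1) / (k + 1 : ℕ)) * natCast_mul_Ppoly_id g (m - k)
  have hm : C ((m + 1 : ℕ) : ℝ) ≠ 0 := C_ne_zero.2 (by positivity)
  refine mul_left_cancel₀ hm ?_
  calc C ((m + 1 : ℕ) : ℝ) * derivative (𝔓 (m + 1))
      = derivative (X * T) := by rw [← hT, derivative_C_mul]
    _ = X * derivative T + T := by rw [derivative_mul, derivative_X, one_mul, add_comm]
    _ = _ := by
      rw [Nat.add_sub_cancel, mul_sum, sum_congr rfl hsplit, sum_add_distrib, hT', ← mul_sum]
      congr 2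
      rw [sum_comm' (t' := range (m + 1)) (s' := fun j => range (m - j))
        fun k j => by simp only [mem_range]; omega]
      refine sum_congr rfl fun j _ => sum_congr rfl fun k _ => ?_
      rw [show m - k - 1 - j = m - j - 1 - k by omega]
      ring

lemma Ppoly_div_const_one_coeff (n m : ℕ) :
    (Ppoly (fun k => g k / (k : ℝ)) (fun _ => 1) n).coeff m = m.factorial * (𝔓 n).coeff m := by
  induction n using Nat.strong_induction_on generalizing m with
  | _ n ih =>
  rcases n with _ | s
  · rw [Ppoly_zero, Ppoly_zero, coeff_one]
    split_ifs with hm <;> simp [hm]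
  rcases m with _ | j
  · rw [Ppoly_succ_coeff_zero, Ppoly_succ_coeff_zero, mul_zero]
  calc _ = j.factorial * (derivative (𝔓 (s + 1))).coeff j := by
        rw [Ppoly_succ_coeff_succ, derivative_Ppoly_id, finsetSum_coeff, inv_one, one_mul,
          mul_sum, Nat.add_sub_cancel]
        refine sum_congr rfl fun k hk => ?_
        rw [coeff_C_mul, ih _ (by simp at hk; omega)]
        ring
    _ = _ := by
        rw [coeff_derivative, Nat.factorial_succ]
        push_cast
        ring

end PpolyId

lemma SeqLogConcave.mul {a b : ℕ → ℝ} {n : ℕ} (ha : SeqLogConcave a n) (hb : SeqLogConcave b n)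
    (ha₀ : ∀ j, 0 ≤ a j) : SeqLogConcave (fun j => a j * b j) n := by
  intro j hj₁ hj₂
  calc a (j - 1) * b (j - 1) * (a (j + 1) * b (j + 1))
      = b (j - 1) * b (j + 1) * (a (j - 1) * a (j + 1)) := by ring
    _ ≤ b j ^ 2 * a j ^ 2 :=
      mul_le_mul (hb j hj₁ hj₂) (ha j hj₁ hj₂) (mul_nonneg (ha₀ _) (ha₀ _)) (sq_nonneg _)
    _ = (a j * b j) ^ 2 := by ring

lemma seqLogConcave_inv_factorial (n : ℕ) :
    SeqLogConcave (fun j => (j.factorial : ℝ)⁻¹) n := by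
  intro j hj _
  obtain ⟨i, rfl⟩ : ∃ i, j = i + 1 := ⟨j - 1, by omega⟩
  have hfac : (i + 1).factorial ^ 2 ≤ i.factorial * (i + 1 + 1).factorial := by
    rw [Nat.factorial_succ (i + 1), Nat.factorial_succ i]
    nlinarith [i.factorial_pos]
  dsimp only
  rw [Nat.add_sub_cancel, ge_iff_le, ← mul_inv, inv_pow]
  exact inv_anti₀ (by positivity) (by exact_mod_cast hfac)

theorem log_concavity_transfer_general (g : ℕ → ℝ)
    (hpos : ∀ k, 1 ≤ k → 0 ≤ g k) (n : ℕ) :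
    (SeqLogConcave (fun j => (Ppoly (fun k => g k / (k : ℝ)) (fun _ => 1) n).coeff j) n →
        SeqLogConcave (fun j => (Ppoly g (fun k => (k : ℝ)) n).coeff j) n) ∧
      (SeqUltraLogConcave (fun j => (Ppoly (fun k => g k / (k : ℝ)) (fun _ => 1) n).coeff j) n →
        SeqUltraLogConcave (fun j => (Ppoly g (fun k => (k : ℝ)) n).coeff j) n) := by
  have hcoeff : ∀ j, (Ppoly g (fun k => (k : ℝ)) n).coeff j =
      (Ppoly (fun k => g k / (k : ℝ)) (fun _ => 1) n).coeff j * (j.factorial : ℝ)⁻¹ := by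
    intro j
    rw [Ppoly_div_const_one_coeff]
    field_simp
  have hnonneg : ∀ j, 0 ≤ (Ppoly (fun k => g k / (k : ℝ)) (fun _ => 1) n).coeff j :=
    Ppoly_coeff_nonneg _ _ (fun k => div_nonneg (hpos _ k.succ_pos) k.succ.cast_nonneg)
      (fun _ => zero_le_one) n
  refine ⟨fun h => ?_, fun h => ?_⟩
  · simpa only [hcoeff] using h.mul (seqLogConcave_inv_factorial n) hnonneg
  · simpa only [SeqUltraLogConcave, hcoeff, div_mul_eq_mul_div] using
      h.mul (seqLogConcave_inv_factorial n) fun j => div_nonneg (hnonneg j) (Nat.cast_nonneg _)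

/-- Log-concavity (resp. ultra-log-concavity) of the coefficients of `P_n^{g̃,1}`
transfers to the coefficients of `P_n^{g,id}`, where `g̃(k) = g(k)/k`. -/
theorem log_concavity_transfer (g : ℕ → ℝ) (hg : g 1 = 1)
    (hmod : ∃ C : ℝ, 0 < C ∧ ∀ k, 1 ≤ k → |g k| ≤ C ^ k)
    (hpos : ∀ k, 1 ≤ k → 0 ≤ g k) (n : ℕ) (hn : 1 ≤ n) :
    (SeqLogConcave (fun j => (Ppoly (fun k => g k / (k : ℝ)) (fun _ => 1) n).coeff j) n →
        SeqLogConcave (fun j => (Ppoly g (fun k => (k : ℝ)) n).coeff j) n) ∧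
      (SeqUltraLogConcave (fun j => (Ppoly (fun k => g k / (k : ℝ)) (fun _ => 1) n).coeff j) n →
        SeqUltraLogConcave (fun j => (Ppoly g (fun k => (k : ℝ)) n).coeff j) n) :=
  log_concavity_transfer_general g hpos n
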